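/- arXiv:nlin/0503021 — 2 statements merged into one kernel-verified Lean document; each statement's English description precedes it below -/
import Mathlib

section
/- Suppose V_x : [0, z*) → ℝ is twice differentiable, V_x(0) > 0, V_x'(0) = 2V_{xp}(0), and V_x''(z) ≤ 4(H(0) − H̄) + 4Rz with R ≥ 0. If the cubic F(z) = V_x(0) + 2V_{xp}(0)z + 2(H(0) − H̄)z² + (2R/3)z³ has a positive root z₁, then V_x(z₁') ≤ 0 for some z₁' ≤ z₁; hence if V_x must remain positive on the interval of existence, then z* ≤ z₁. -/
open Set

/-!
Compare `V_x` with the cubic `F`: `F(0) = V_x(0)`, `F'(0) = 2V_{xp}(0) = V_x'(0)` and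
`F''(z) = 4(H(0) - H̄) + 4Rz ≥ V_x''(z)`, so two integrations of `V_x'' ≤ F''` give `V_x ≤ F`
on `[0, z₁]`; in particular `V_x(z₁) ≤ F(z₁) = 0`.
-/

theorem le_on_Icc_of_hasDerivAt_le {u v u' v' : ℝ → ℝ} {a b : ℝ}
    (hu : ∀ x ∈ Icc a b, HasDerivAt u (u' x) x) (hv : ∀ x ∈ Icc a b, HasDerivAt v (v' x) x)
    (ha : u a ≤ v a) (hderiv : ∀ x ∈ Ioo a b, u' x ≤ v' x) :
    ∀ x ∈ Icc a b, u x ≤ v x := by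
  have hmono : MonotoneOn (fun x => v x - u x) (Icc a b) := by
    refine monotoneOn_of_hasDerivWithinAt_nonneg (f' := fun x => v' x - u' x) (convex_Icc a b)
      (fun x hx => ((hv x hx).sub (hu x hx)).continuousAt.continuousWithinAt) (fun x hx => ?_)
      (fun x hx => ?_) <;> rw [interior_Icc] at hx
    · exact ((hv x (Ioo_subset_Icc_self hx)).sub (hu x (Ioo_subset_Icc_self hx))).hasDerivWithinAt
    · exact sub_nonneg.mpr (hderiv x hx)
  intro x hx
  have := hmono (left_mem_Icc.mpr (hx.1.trans hx.2)) hx hx.1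
  simp only at this
  linarith

theorem le_on_Icc_of_hasDerivAt_le₂ {u v u' v' u'' v'' : ℝ → ℝ} {a b : ℝ}
    (hu : ∀ x ∈ Icc a b, HasDerivAt u (u' x) x) (hv : ∀ x ∈ Icc a b, HasDerivAt v (v' x) x)
    (hu' : ∀ x ∈ Icc a b, HasDerivAt u' (u'' x) x) (hv' : ∀ x ∈ Icc a b, HasDerivAt v' (v'' x) x)
    (ha : u a ≤ v a) (ha' : u' a ≤ v' a) (hderiv₂ : ∀ x ∈ Ioo a b, u'' x ≤ v'' x) :
    ∀ x ∈ Icc a b, u x ≤ v x :=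
  le_on_Icc_of_hasDerivAt_le hu hv ha fun x hx =>
    le_on_Icc_of_hasDerivAt_le hu' hv' ha' hderiv₂ x (Ioo_subset_Icc_self hx)

theorem hasDerivAt_cubic (c₀ c₁ c₂ c₃ x : ℝ) :
    HasDerivAt (fun z => c₀ + c₁ * z + c₂ * z ^ 2 + c₃ * z ^ 3)
      (c₁ + 2 * c₂ * x + 3 * c₃ * x ^ 2) x := by
  refine ((((hasDerivAt_const x c₀).add ((hasDerivAt_id' x).const_mul c₁)).add
    ((hasDerivAt_pow 2 x).const_mul c₂)).add ((hasDerivAt_pow 3 x).const_mul c₃)).congr_deriv ?_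
  push_cast
  ring

theorem hasDerivAt_quadratic (c₀ c₁ c₂ x : ℝ) :
    HasDerivAt (fun z => c₀ + c₁ * z + c₂ * z ^ 2) (c₁ + 2 * c₂ * x) x := by
  simpa using hasDerivAt_cubic c₀ c₁ c₂ 0 x

theorem stmt_6_general (zs H0 Hbar R Vxp0 z₁ : ℝ) (Vx Vx' Vx'' : ℝ → ℝ)
    (hd1 : ∀ z ∈ Ico (0:ℝ) zs, HasDerivAt Vx (Vx' z) z)
    (hd2 : ∀ z ∈ Ico (0:ℝ) zs, HasDerivAt Vx' (Vx'' z) z)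
    (hineq : ∀ z ∈ Ico (0:ℝ) zs, Vx'' z ≤ 4 * (H0 - Hbar) + 4 * R * z)
    (h0 : Vx' 0 = 2 * Vxp0)
    (hz₁pos : 0 < z₁)
    (hroot : Vx 0 + 2 * Vxp0 * z₁ + 2 * (H0 - Hbar) * z₁ ^ 2 + (2 * R / 3) * z₁ ^ 3 = 0) :
    (z₁ < zs → ∃ z₁', 0 ≤ z₁' ∧ z₁' ≤ z₁ ∧ Vx z₁' ≤ 0) ∧
      ((∀ z ∈ Ico (0:ℝ) zs, 0 < Vx z) → zs ≤ z₁) := by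
  have hVx_z₁ : z₁ < zs → Vx z₁ ≤ 0 := by
    intro hlt
    have hsub : Icc 0 z₁ ⊆ Ico 0 zs := Icc_subset_Ico_right hlt
    have hle := le_on_Icc_of_hasDerivAt_le₂ (fun x hx => hd1 x (hsub hx))
      (fun x _ => hasDerivAt_cubic (Vx 0) (2 * Vxp0) (2 * (H0 - Hbar)) (2 * R / 3) x)
      (fun x hx => hd2 x (hsub hx))
      (fun x _ => hasDerivAt_quadratic (2 * Vxp0) (2 * (2 * (H0 - Hbar))) (3 * (2 * R / 3)) x)
      (by simp) (by simp [h0]) (fun x hx => by linarith [hineq x (hsub (Ioo_subset_Icc_self hx))])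
      z₁ (right_mem_Icc.mpr hz₁pos.le)
    exact hle.trans hroot.le
  refine ⟨fun hlt => ⟨z₁, hz₁pos.le, le_rfl, hVx_z₁ hlt⟩, fun hpos => ?_⟩
  by_contra! hlt
  exact (hpos z₁ ⟨hz₁pos.le, hlt⟩).not_ge (hVx_z₁ hlt)

/-- Longitudinal singularity: if `V_x'' ≤ 4(H(0)-H̄) + 4Rz` and the cubic
`F(z) = V_x(0) + 2V_{xp}(0) z + 2(H(0)-H̄) z² + (2R/3) z³` has a positive root `z₁`,
then `V_x` takes a nonpositive value at some `z₁' ≤ z₁`; hence if `V_x` must stay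
positive on the interval of existence, then `zs ≤ z₁`. -/
theorem stmt_6 (zs H0 Hbar R Vxp0 z₁ : ℝ) (Vx Vx' Vx'' : ℝ → ℝ)
    (hzs : 0 < zs) (hR : 0 ≤ R) (hVx0 : 0 < Vx 0)
    (hd1 : ∀ z ∈ Ico (0:ℝ) zs, HasDerivAt Vx (Vx' z) z)
    (hd2 : ∀ z ∈ Ico (0:ℝ) zs, HasDerivAt Vx' (Vx'' z) z)
    (hineq : ∀ z ∈ Ico (0:ℝ) zs, Vx'' z ≤ 4 * (H0 - Hbar) + 4 * R * z)
    (h0 : Vx' 0 = 2 * Vxp0)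
    (hz₁pos : 0 < z₁)
    (hroot : Vx 0 + 2 * Vxp0 * z₁ + 2 * (H0 - Hbar) * z₁ ^ 2 + (2 * R / 3) * z₁ ^ 3 = 0) :
    (z₁ < zs → ∃ z₁', 0 ≤ z₁' ∧ z₁' ≤ z₁ ∧ Vx z₁' ≤ 0) ∧
      ((∀ z ∈ Ico (0:ℝ) zs, 0 < Vx z) → zs ≤ z₁) :=
  stmt_6_general zs H0 Hbar R Vxp0 z₁ Vx Vx' Vx'' hd1 hd2 hineq h0 hz₁pos hroot
end

section
/- If a C² function V_x : [0, z*) → ℝ with V_x(z) > 0 satisfies V_x''(z) ≤ (2 − dσ)V_p(z) < 0 with dσ > 2 and V_p(z) ≥ (V_x'(z))²/(4V_x(0)) (which follows from V_{xp}² ≤ V_x V_p and V_x decreasing, where V_x' = 2V_{xp}), and if V_x'(0) < 0, then A = −V_x' satisfies A' ≥ C A² with C = (dσ − 2)/(4V_x(0)) > 0, and consequently z* ≤ 1/(C·A(0)) = 2V_x(0)/(|V_{xp}(0)|(dσ − 2)). -/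
open Set

/-- Supercritical blow-up mechanism: under `dσ > 2`, `V_x > 0`,
`V_x'' ≤ (2 - dσ)V_p < 0`, `V_p ≥ (V_x')²/(4V_x(0))` and `V_x'(0) < 0`,
the function `A = -V_x'` satisfies `A' ≥ C A²` with `C = (dσ-2)/(4V_x(0))`,
and consequently `zs ≤ 2V_x(0)/(|V_{xp}(0)|(dσ-2))`. -/
theorem stmt_8 (zs ds : ℝ) (Vx Vx' Vx'' Vp Vxp : ℝ → ℝ)
    (hzs : 0 < zs) (hds : 2 < ds)
    (hd1 : ∀ z ∈ Ico (0:ℝ) zs, HasDerivAt Vx (Vx' z) z)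
    (hd2 : ∀ z ∈ Ico (0:ℝ) zs, HasDerivAt Vx' (Vx'' z) z)
    (hcont : ContinuousOn Vx'' (Ico (0:ℝ) zs))
    (hpos : ∀ z ∈ Ico (0:ℝ) zs, 0 < Vx z)
    (hVxp : ∀ z ∈ Ico (0:ℝ) zs, Vx' z = 2 * Vxp z)
    (hVp : ∀ z ∈ Ico (0:ℝ) zs, Vx'' z ≤ (2 - ds) * Vp z ∧ (2 - ds) * Vp z < 0)
    (hCS : ∀ z ∈ Ico (0:ℝ) zs, (Vx' z) ^ 2 / (4 * Vx 0) ≤ Vp z)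
    (h0 : Vx' 0 < 0) :
    (∀ z ∈ Ico (0:ℝ) zs, ((ds - 2) / (4 * Vx 0)) * (-(Vx' z)) ^ 2 ≤ -(Vx'' z)) ∧
      zs ≤ 2 * Vx 0 / (|Vxp 0| * (ds - 2)) := by
  have h0mem : (0:ℝ) ∈ Ico (0:ℝ) zs := ⟨le_refl 0, hzs⟩
  have hVx0 : 0 < Vx 0 := hpos 0 h0mem
  set c : ℝ := (ds - 2) / (4 * Vx 0) with hc
  have hcpos : 0 < c := div_pos (by linarith) (by linarith)
  -- `Vx'` is strictly decreasing, hence negative on the whole interval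
  have hcontVx' : ContinuousOn Vx' (Ico 0 zs) :=
    fun z hz => (hd2 z hz).continuousAt.continuousWithinAt
  have hanti : StrictAntiOn Vx' (Ico 0 zs) := by
    apply strictAntiOn_of_deriv_neg (convex_Ico 0 zs) hcontVx'
    intro z hz
    rw [interior_Ico] at hz
    have hz' : z ∈ Ico (0:ℝ) zs := ⟨le_of_lt hz.1, hz.2⟩
    rw [(hd2 z hz').deriv]
    exact lt_of_le_of_lt (hVp z hz').1 (hVp z hz').2
  have hneg : ∀ z ∈ Ico (0:ℝ) zs, Vx' z < 0 := by
    intro z hz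
    rcases eq_or_lt_of_le hz.1 with h | h
    · rw [← h]; exact h0
    · exact lt_trans (hanti h0mem hz h) h0
  -- Part 1
  have part1 : ∀ z ∈ Ico (0:ℝ) zs, c * (-(Vx' z)) ^ 2 ≤ -(Vx'' z) := by
    intro z hz
    have h1 := (hVp z hz).1
    have h2 := hCS z hz
    have h2' : (Vx' z) ^ 2 ≤ 4 * Vx 0 * Vp z := by
      rw [div_le_iff₀ (by linarith)] at h2; linarith [h2]
    have hcc : c * (4 * Vx 0) = ds - 2 := by
      rw [hc]; exact div_mul_cancel₀ _ (ne_of_gt (by linarith))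
    nlinarith [mul_le_mul_of_nonneg_left h2' hcpos.le]
  -- Part 2
  have hnegne : ∀ z ∈ Ico (0:ℝ) zs, -(Vx' z) ≠ 0 := by
    intro z hz
    have := hneg z hz
    exact ne_of_gt (by linarith)
  set h : ℝ → ℝ := fun z => (-(Vx' z))⁻¹ + c * z with hh
  have hder : ∀ z ∈ Ico (0:ℝ) zs, HasDerivAt h (Vx'' z / (Vx' z) ^ 2 + c) z := by
    intro z hz
    have hne := hnegne z hz
    have h1 : HasDerivAt (fun w => -(Vx' w)) (-(Vx'' z)) z := (hd2 z hz).neg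
    have h2 := h1.inv hne
    have h3 : HasDerivAt (fun w => c * w) c z := by
      simpa using (hasDerivAt_id z).const_mul c
    have h4 := h2.add h3
    convert h4 using 1
    have : (Vx' z) ^ 2 ≠ 0 := pow_ne_zero 2 (by intro hx; exact hne (by rw [hx]; ring))
    case e'_9 => simp only [neg_neg, neg_sq]
    all_goals rfl
  have hcontH : ContinuousOn h (Ico 0 zs) :=
    fun z hz => (hder z hz).continuousAt.continuousWithinAt
  have hAnti : AntitoneOn h (Ico 0 zs) := by
    apply antitoneOn_of_deriv_nonpos (convex_Ico 0 zs) hcontH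
    · intro z hz
      rw [interior_Ico] at hz
      exact ((hder z ⟨le_of_lt hz.1, hz.2⟩).differentiableAt).differentiableWithinAt
    intro z hz
    rw [interior_Ico] at hz
    have hz' : z ∈ Ico (0:ℝ) zs := ⟨le_of_lt hz.1, hz.2⟩
    rw [(hder z hz').deriv]
    have hp := part1 z hz'
    have hsq : 0 < (Vx' z) ^ 2 := by
      have := hneg z hz'
      exact pow_pos (by linarith : (0:ℝ) < -(Vx' z)) 2 |>.trans_eq (by ring)
    rw [← sub_nonpos]
    have : Vx'' z / (Vx' z) ^ 2 ≤ -c := by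
      rw [div_le_iff₀ hsq]
      nlinarith [hp]
    linarith
  -- pointwise bound: z < (-(Vx' 0))⁻¹ / c
  have hbound : ∀ z ∈ Ico (0:ℝ) zs, z < (-(Vx' 0))⁻¹ / c := by
    intro z hz
    have hle := hAnti h0mem hz hz.1
    have hpos1 : 0 < (-(Vx' z))⁻¹ := inv_pos.mpr (by linarith [hneg z hz])
    have : c * z < (-(Vx' 0))⁻¹ := by
      simp only [hh, mul_zero, add_zero] at hle
      linarith
    rw [lt_div_iff₀ hcpos]
    linarith [this]
  have hB : zs ≤ (-(Vx' 0))⁻¹ / c := by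
    apply le_of_forall_lt
    intro w hw
    rcases lt_or_ge w 0 with hw0 | hw0
    · have h1 : 0 < (-(Vx' 0))⁻¹ := inv_pos.mpr (by linarith)
      have : 0 < (-(Vx' 0))⁻¹ / c := div_pos h1 hcpos
      linarith
    · exact hbound w ⟨hw0, hw⟩
  refine ⟨part1, ?_⟩
  have hVxp0 : Vx' 0 = 2 * Vxp 0 := hVxp 0 h0mem
  have hVxp0neg : Vxp 0 < 0 := by linarith
  have habs : |Vxp 0| = -Vxp 0 := abs_of_neg hVxp0neg
  have hEq : (-(Vx' 0))⁻¹ / c = 2 * Vx 0 / (|Vxp 0| * (ds - 2)) := by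
    have h1 : Vxp 0 ≠ 0 := ne_of_lt hVxp0neg
    have h2 : ds - 2 ≠ 0 := by linarith
    have h3 : Vx 0 ≠ 0 := ne_of_gt hVx0
    rw [habs, hVxp0, hc]
    rw [div_div_eq_mul_div, div_eq_div_iff (by positivity) (by nlinarith [mul_pos (neg_pos.mpr hVxp0neg) (show (0:ℝ) < ds - 2 by linarith)])]
    field_simp
    ring
  linarith [hB, hEq.le, hEq.ge]
end
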